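/- arXiv:2111.01284 — 3 statements merged into one kernel-verified Lean document; each statement's English description precedes it below -/
import Mathlib

section
/- Let $K$ be a group and let $G$ be the HNN extension $\langle K, t \mid t g t^{-1} = j\rangle$, where $g, j \in K$ satisfy $g^2 = j^2 = 1$, $g \neq 1$, $j \neq 1$, the centralizer of $g$ in $K$ equals $\langle g\rangle$, the centralizer of $j$ in $K$ equals $\langle j\rangle$, and $g$ and $j$ are not conjugate in $K$. Then the centralizer of $g$ in $G$ equals $\langle g\rangle$. -/
/-!
Write `x ∈ C_G(g)` as a reduced word `h t^ε k ⋯`. Comparing the reduced words of `x g` and `g x`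
(Britton's lemma), `h⁻¹ g h` lies in the associated subgroup of `t^(-ε)`. As `g` and `j` are
non-conjugate involutions, this forces `ε = -1` and `h ∈ C_K(g) = ⟨g⟩`, so that the tail `k ⋯`
conjugates `g` to `j`. The same argument applied to the tail forces its first letter to be `t` and
`k ∈ C_K(j) = ⟨j⟩`, i.e. a pinch `t⁻¹ k t` inside a reduced word. Hence `x` has no `t`-letters,
and `x ∈ C_K(g) = ⟨g⟩`.
-/

open HNNExtension HNNExtension.NormalWord Subgroup

section

variable {G : Type*} [Group G]

theorem eq_one_or_eq_of_mem_zpowers_of_sq_eq_one {d x : G}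
    (hd : d ^ 2 = 1) (hx : x ∈ zpowers d) : x = 1 ∨ x = d := by
  obtain ⟨n, rfl⟩ := mem_zpowers_iff.1 hx
  rw [zpow_eq_zpow_emod' n hd]
  rcases Int.emod_two_eq n with h | h <;> simp [h]

theorem conj_eq_of_conj_mem_zpowers {a c d : G} (hd : d ^ 2 = 1)
    (hc : c ≠ 1) (h : a⁻¹ * c * a ∈ zpowers d) : a⁻¹ * c * a = d :=
  (eq_one_or_eq_of_mem_zpowers_of_sq_eq_one hd h).resolve_left fun h1 =>
    hc (by simpa [mul_assoc] using congrArg (a * · * a⁻¹) h1)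

theorem isConj_of_conj_mem_zpowers {a c d : G} (hd : d ^ 2 = 1)
    (hc : c ≠ 1) (h : a⁻¹ * c * a ∈ zpowers d) : IsConj c d :=
  isConj_iff.2 ⟨a⁻¹, by simpa using conj_eq_of_conj_mem_zpowers hd hc h⟩

theorem mem_zpowers_of_conj_mem_zpowers {a d : G} (hd : d ^ 2 = 1)
    (hd1 : d ≠ 1) (hC : centralizer {d} = zpowers d) (h : a⁻¹ * d * a ∈ zpowers d) :
    a ∈ zpowers d := by
  rw [← hC, mem_centralizer_singleton_iff]
  have := conj_eq_of_conj_mem_zpowers hd hd1 h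
  rw [mul_assoc, inv_mul_eq_iff_eq_mul] at this
  exact this.symm

end

namespace HNNExtension.ReducedWord

section

variable {G : Type*} [Group G] {A B : Subgroup G} (φ : A ≃* B)

theorem exists_prod_eq (x : HNNExtension G A B φ) : ∃ w : ReducedWord G A B, w.prod φ = x := by
  obtain ⟨d⟩ := TransversalPair.nonempty G A B
  exact ⟨(x • (NormalWord.empty : NormalWord d)).toReducedWord, by simp⟩

theorem exists_prod_mul_of_eq (w : ReducedWord G A B) (hw : w.toList ≠ []) (c : G) :
    ∃ w' : ReducedWord G A B, w'.head = w.head ∧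
      w'.toList.map Prod.fst = w.toList.map Prod.fst ∧ w'.prod φ = w.prod φ * of c := by
  obtain ⟨l, ⟨u, k⟩, hl⟩ := (List.eq_nil_or_concat' w.toList).resolve_left hw
  have chain := w.chain
  rw [hl, List.isChain_append] at chain
  refine ⟨⟨w.head, l ++ [(u, k * c)], List.isChain_append.2 ⟨chain.1, List.isChain_singleton _,
    fun a ha b hb => ?_⟩⟩, rfl, by simp [hl], ?_⟩
  · simp only [List.head?_cons, Option.mem_def, Option.some.injEq] at hb
    subst hb
    exact chain.2.2 a ha (u, k) rfl
  · simp [ReducedWord.prod, hl, mul_assoc]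

theorem conj_mem_toSubgroup_of_prod_mul_eq (w : ReducedWord G A B) {u : ℤˣ} {k : G}
    {l : List (ℤˣ × G)} (hw : w.toList = (u, k) :: l) {c c' : G}
    (h : w.prod φ * of c = of c' * w.prod φ) :
    w.head⁻¹ * c' * w.head ∈ toSubgroup A B (-u) := by
  obtain ⟨w', hhead, hfst, hprod⟩ := exists_prod_mul_of_eq φ w (by simp [hw]) c
  have hprod' : w'.prod φ = (⟨c' * w.head, w.toList, w.chain⟩ : ReducedWord G A B).prod φ := by
    rw [hprod, h]
    simp [ReducedWord.prod, mul_assoc]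
  have hu : u ∈ w'.toList.head?.map Prod.fst := by rw [← List.head?_map, hfst, hw]; rfl
  simpa [hhead, mul_assoc] using (map_fst_eq_and_of_prod_eq φ hprod').2 u hu

end

section Involutions

variable {K : Type*} [Group K] {g j : K} {φ : zpowers g ≃* zpowers j}

theorem head_mem_zpowers_and_toList_eq_cons_one (hg2 : g ^ 2 = 1) (hj2 : j ^ 2 = 1)
    (hj1 : j ≠ 1) (hCj : centralizer {j} = zpowers j) (hconj : ¬ IsConj g j)
    (w : ReducedWord K (zpowers g) (zpowers j)) (h : w.prod φ * of g = of j * w.prod φ) :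
    w.head ∈ zpowers j ∧ ∃ k l, w.toList = (1, k) :: l := by
  rcases hw : w.toList with _ | ⟨⟨u, k⟩, l⟩
  · have hprod : w.prod φ = of w.head := by simp [ReducedWord.prod, hw]
    rw [hprod, ← map_mul, ← map_mul] at h
    exact absurd (isConj_iff.2 ⟨w.head, by rw [of_injective φ h, mul_inv_cancel_right]⟩) hconj
  have hmem := conj_mem_toSubgroup_of_prod_mul_eq φ w hw h
  rcases Int.units_eq_one_or u with rfl | rfl
  · exact ⟨mem_zpowers_of_conj_mem_zpowers hj2 hj1 hCj hmem, k, l, rfl⟩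
  · rw [neg_neg] at hmem
    exact absurd (isConj_of_conj_mem_zpowers hg2 hj1 hmem).symm hconj

theorem toList_eq_nil_of_prod_mul_eq (hg2 : g ^ 2 = 1) (hj2 : j ^ 2 = 1)
    (hg1 : g ≠ 1) (hj1 : j ≠ 1) (hCg : centralizer {g} = zpowers g)
    (hCj : centralizer {j} = zpowers j) (hconj : ¬ IsConj g j)
    (hφ : (φ ⟨g, mem_zpowers g⟩ : K) = j)
    (w : ReducedWord K (zpowers g) (zpowers j)) (h : w.prod φ * of g = of g * w.prod φ) :
    w.toList = [] := by
  rcases hw : w.toList with _ | ⟨⟨u, k⟩, l⟩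
  · rfl
  exfalso
  have hmem := conj_mem_toSubgroup_of_prod_mul_eq φ w hw h
  rcases Int.units_eq_one_or u with rfl | rfl
  · exact hconj (isConj_of_conj_mem_zpowers hj2 hg1 hmem)
  rw [neg_neg] at hmem
  have hhead : of w.head * of g = (of g * of w.head : HNNExtension K _ _ φ) := by
    have hC : w.head ∈ centralizer {g} := by
      rw [hCg]; exact mem_zpowers_of_conj_mem_zpowers hg2 hg1 hCg hmem
    rw [← map_mul, ← map_mul, mem_centralizer_singleton_iff.1 hC]
  have hgt : (of g * t⁻¹ : HNNExtension K _ _ φ) = t⁻¹ * of j := by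
    simpa [hφ] using of_mul_inv_t (φ := φ) ⟨g, mem_zpowers g⟩
  let w' : ReducedWord K (zpowers g) (zpowers j) := ⟨k, l, (hw ▸ w.chain).tail⟩
  have hw' : w.prod φ = of w.head * t⁻¹ * w'.prod φ := by
    simp [w', ReducedWord.prod, hw, mul_assoc]
  have h' : w'.prod φ * of g = of j * w'.prod φ := by
    apply mul_left_cancel (a := of w.head * t⁻¹)
    calc of w.head * t⁻¹ * (w'.prod φ * of g)
      _ = w.prod φ * of g := by rw [hw']; simp only [mul_assoc]
      _ = of g * of w.head * t⁻¹ * w'.prod φ := by rw [h, hw', mul_assoc, mul_assoc, mul_assoc]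
      _ = of w.head * t⁻¹ * (of j * w'.prod φ) := by
        rw [← hhead, mul_assoc (of w.head), hgt]; simp only [mul_assoc]
  obtain ⟨hk, k', l', hl⟩ :=
    head_mem_zpowers_and_toList_eq_cons_one hg2 hj2 hj1 hCj hconj w' h'
  have hchain := w.chain
  rw [hw, show l = (1, k') :: l' from hl, List.isChain_cons_cons] at hchain
  exact (by decide : (-1 : ℤˣ) ≠ 1) (hchain.1 hk)

end Involutions

end HNNExtension.ReducedWord

/-- In the HNN extension `G = ⟨K, t ∣ t g t⁻¹ = j⟩` with `g² = j² = 1`,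
`g, j ≠ 1`, `C_K(g) = ⟨g⟩`, `C_K(j) = ⟨j⟩` and `g` not conjugate to `j` in `K`,
the centralizer of `g` in `G` is `⟨g⟩`. -/
theorem stmt0 {K : Type*} [Group K] (g j : K)
    (hg2 : g ^ 2 = 1) (hj2 : j ^ 2 = 1) (hg1 : g ≠ 1) (hj1 : j ≠ 1)
    (hCg : Subgroup.centralizer {g} = Subgroup.zpowers g)
    (hCj : Subgroup.centralizer {j} = Subgroup.zpowers j)
    (hconj : ¬ IsConj g j)
    (φ : (Subgroup.zpowers g) ≃* (Subgroup.zpowers j))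
    (hφ : (φ ⟨g, Subgroup.mem_zpowers g⟩ : K) = j) :
    Subgroup.centralizer
        {(HNNExtension.of g : HNNExtension K (Subgroup.zpowers g) (Subgroup.zpowers j) φ)} =
      Subgroup.zpowers (HNNExtension.of g) := by
  refine le_antisymm (fun x hx => ?_) (zpowers_le.2 (mem_centralizer_singleton_iff.2 rfl))
  obtain ⟨w, rfl⟩ := ReducedWord.exists_prod_eq φ x
  have hcomm := mem_centralizer_singleton_iff.1 hx
  have hprod : w.prod φ = of w.head := by
    simp [ReducedWord.prod,
      ReducedWord.toList_eq_nil_of_prod_mul_eq hg2 hj2 hg1 hj1 hCg hCj hconj hφ w hcomm]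
  rw [hprod, ← map_mul, ← map_mul] at hcomm
  have hhead : w.head ∈ centralizer {g} := mem_centralizer_singleton_iff.2 (of_injective φ hcomm)
  rw [hCg] at hhead
  rw [hprod, ← MonoidHom.map_zpowers]
  exact mem_map_of_mem _ hhead
end

section
/- Let $\pi = A *_{\langle g \rangle} B$ be an amalgamated free product over a subgroup $\langle g\rangle$ of order 2. Then the centralizer $C_\pi(g)$ is generated by $C_A(g) \cup C_B(g)$. -/
/-! Write an element of the centralizer of `g₀` as `base h * a₁ ⋯ aₙ` with `a₁ ⋯ aₙ` a reduced
word, `a₁ ∈ G i`, and put `c = a₂ ⋯ aₙ`. Commuting with `g₀` means `c g₀ c⁻¹ = a₁⁻¹ g₀ a₁ ∈ G i`.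
If `a₁⁻¹ g₀ a₁` were outside the image of `H`, the word `c⁻¹ (a₁⁻¹ g₀ a₁) c` would be a nonempty
reduced word representing an element of `H`, contradicting the normal form theorem. So
`a₁⁻¹ g₀ a₁` lies in `H = {1, g₀}`, where it can only be `g₀`: then `a₁` and `c` both centralize
`g₀`, and induction on `n` finishes. -/

open Monoid Subgroup

/-- A two-element index family of groups, used to form amalgamated free products
`A *_H B` as `Monoid.PushoutI`. -/
def Fam2 (A B : Type u) : Bool → Type u := fun i => cond i A B

instance Fam2.group {A B : Type u} [Group A] [Group B] : ∀ i, Group (Fam2 A B i)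
  | true => ‹Group A›
  | false => ‹Group B›

/-- The family of maps defining the amalgam `A *_H B`. -/
def amalgMaps {H A B : Type u} [Group H] [Group A] [Group B]
    (ιA : H →* A) (ιB : H →* B) : ∀ i, H →* Fam2 A B i
  | true => ιA
  | false => ιB

namespace Monoid.PushoutI

open CoprodI

variable {ι : Type*} {G : ι → Type*} {H : Type*} [∀ i, Group (G i)] [Group H]
  {φ : ∀ i, H →* G i}

theorem Reduced.neWord_inv {i j : ι} {w : NeWord G i j} (hw : Reduced φ w.toWord) :
    Reduced φ w.inv.toWord := by
  induction w with
  | singleton x _ =>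
    rintro p (_ | ⟨_, ⟨⟩⟩)
    exact fun h => hw _ List.mem_cons_self (inv_inv x ▸ inv_mem h)
  | append w₁ _ w₂ ih₁ ih₂ =>
    have hw₁ : Reduced φ w₁.toWord := fun p hp => hw p (List.mem_append_left _ hp)
    have hw₂ : Reduced φ w₂.toWord := fun p hp => hw p (List.mem_append_right _ hp)
    rintro p hp
    rcases List.mem_append.mp hp with hp | hp
    exacts [ih₂ hw₂ p hp, ih₁ hw₁ p hp]

theorem Reduced.mem_range_of_conj_mem_range_base (hφ : ∀ i, Function.Injective (φ i))
    {w : Word G} (hw : Reduced φ w) {i : ι} (hi : w.fstIdx ≠ some i) {m : G i}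
    (hbase : (ofCoprodI w.prod)⁻¹ * of i m * ofCoprodI w.prod ∈ (base φ).range) :
    m ∈ (φ i).range := by
  by_contra hm
  have hm1 : m ≠ 1 := fun h => hm (h ▸ one_mem _)
  by_cases hw₀ : w = .empty
  · subst hw₀
    obtain ⟨h, hh⟩ := hbase
    simp only [Word.prod_empty, map_one, inv_one, one_mul, mul_one] at hh
    exact hm ⟨h, of_injective hφ i (by rw [of_apply_eq_base, hh])⟩
  obtain ⟨j, k, v, rfl⟩ := NeWord.of_word w hw₀
  have hji : j ≠ i := fun h => hi (by simp [Word.fstIdx, NeWord.toWord, v.toList_head?, h])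
  set W := (v.inv.append hji (.singleton m hm1)).append hji.symm v with hW
  have hWred : Reduced φ W.toWord := by
    rintro p hp
    simp only [hW, NeWord.toWord, NeWord.toList, List.mem_append, List.mem_singleton] at hp
    rcases hp with (hp | rfl) | hp
    exacts [hw.neWord_inv p hp, hm, hw p hp]
  have hWprod :
      ofCoprodI (φ := φ) W.prod = (ofCoprodI v.prod)⁻¹ * of i m * ofCoprodI v.prod := by
    simp [hW, ofCoprodI_of]
  exact W.toList_ne_nil (congrArg Word.toList (hWred.eq_empty_of_mem_range hφ (hWprod ▸ hbase)))

theorem Reduced.ofCoprodI_prod_mem_iSup_map_centralizer (hφ : ∀ i, Function.Injective (φ i))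
    {g₀ : H} (hconj : ∀ i h, IsConj (φ i g₀) (φ i h) → h = g₀)
    {w : Word G} (hw : Reduced φ w) (hc : ofCoprodI w.prod ∈ centralizer {base φ g₀}) :
    ofCoprodI w.prod ∈ ⨆ i, (centralizer {φ i g₀}).map (of (φ := φ) i) := by
  induction w using Word.consRecOn with
  | empty => simp
  | cons i a w hi _ ih =>
    have hw' : Reduced φ w := fun p hp => hw p (List.mem_cons_of_mem _ hp)
    rw [Word.prod_cons, map_mul, ofCoprodI_of] at hc ⊢
    set c := ofCoprodI (φ := φ) w.prod
    rw [mem_centralizer_singleton_iff] at hc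
    have hc_conj : c⁻¹ * of i (a⁻¹ * φ i g₀ * a) * c = base φ g₀ :=
      calc c⁻¹ * of i (a⁻¹ * φ i g₀ * a) * c = (of i a * c)⁻¹ * base φ g₀ * (of i a * c) := by
            simp only [map_mul, map_inv, of_apply_eq_base]; group
        _ = base φ g₀ := by rw [mul_assoc, ← hc]; group
    have hg₀ : a⁻¹ * φ i g₀ * a = φ i g₀ := by
      obtain ⟨h, hh⟩ := hw'.mem_range_of_conj_mem_range_base hφ hi ⟨g₀, hc_conj.symm⟩
      rw [← hh, hconj i h (isConj_iff.mpr ⟨a⁻¹, by rw [inv_inv, hh]⟩)]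
    have ha : a ∈ centralizer {φ i g₀} := by
      rw [mem_centralizer_singleton_iff]
      nth_rewrite 1 [← hg₀]
      group
    have hc' : c ∈ centralizer {base φ g₀} := by
      rw [hg₀, of_apply_eq_base] at hc_conj
      rw [mem_centralizer_singleton_iff]
      nth_rewrite 1 [← hc_conj]
      group
    exact mul_mem (mem_iSup_of_mem i (mem_map_of_mem _ ha)) (ih hw' hc')

theorem exists_reduced_base_mul_eq (hφ : ∀ i, Function.Injective (φ i)) (x : PushoutI φ) :
    ∃ (h : H) (w : Word G), Reduced φ w ∧ base φ h * ofCoprodI w.prod = x := by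
  classical
  obtain ⟨d⟩ := NormalWord.transversal_nonempty φ hφ
  set N := x • (NormalWord.empty : NormalWord d)
  have hN : N.prod = x := by simp [N, NormalWord.prod_smul, NormalWord.prod_empty]
  refine ⟨N.head, N.toWord, ?_, hN⟩
  rintro ⟨i, g⟩ hg hrange
  have := (d.compl i).equiv_snd_eq_self_of_mem_of_one_mem (one_mem _) (N.normalized i _ hg)
  rw [(d.compl i).equiv_snd_eq_one_of_mem_of_one_mem (d.one_mem i) hrange] at this
  exact N.ne_one _ hg (congrArg Subtype.val this).symm

theorem centralizer_base_eq_iSup_map_centralizer [Nonempty ι]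
    (hφ : ∀ i, Function.Injective (φ i)) {g₀ : H} (hcenter : g₀ ∈ center H)
    (hconj : ∀ i h, IsConj (φ i g₀) (φ i h) → h = g₀) :
    centralizer {base φ g₀} = ⨆ i, (centralizer {φ i g₀}).map (of (φ := φ) i) := by
  refine le_antisymm (fun x hx => ?_) (iSup_le fun i => ?_)
  · obtain ⟨h, w, hw, rfl⟩ := exists_reduced_base_mul_eq hφ x
    obtain ⟨i⟩ := ‹Nonempty ι›
    have hh : φ i h ∈ centralizer {φ i g₀} := by
      rw [mem_centralizer_singleton_iff, ← map_mul, ← map_mul, hcenter.comm]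
    have hbase : base φ h ∈ centralizer {base φ g₀} := by
      rw [mem_centralizer_singleton_iff, ← map_mul, ← map_mul, hcenter.comm]
    have hw_mem : ofCoprodI w.prod ∈ centralizer {base φ g₀} := by
      simpa using mul_mem (inv_mem hbase) hx
    refine mul_mem (mem_iSup_of_mem i ⟨φ i h, hh, of_apply_eq_base φ i h⟩) ?_
    exact hw.ofCoprodI_prod_mem_iSup_map_centralizer hφ hconj hw_mem
  · refine (map_centralizer_le_centralizer_image _ _).trans ?_
    rw [Set.image_singleton, of_apply_eq_base]

end Monoid.PushoutI

theorem eq_one_or_eq_of_mem_zpowers_of_orderOf_eq_two {G : Type*} [Group G] {g x : G}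
    (hg : orderOf g = 2) (hx : x ∈ zpowers g) : x = 1 ∨ x = g := by
  classical
  have hfin : IsOfFinOrder g := orderOf_pos_iff.mp (by omega)
  simpa [hg, Finset.range_add_one, or_comm, eq_comm] using
    hfin.mem_zpowers_iff_mem_range_orderOf.mp hx

theorem eq_of_isConj_of_orderOf_eq_two {H G : Type*} [Group H] [Group G] {f : H →* G}
    (hf : Function.Injective f) {g₀ h : H} (hg₀ : orderOf g₀ = 2) (hh : h ∈ zpowers g₀)
    (hconj : IsConj (f g₀) (f h)) : h = g₀ := by
  refine (eq_one_or_eq_of_mem_zpowers_of_orderOf_eq_two hg₀ hh).resolve_left fun h1 => ?_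
  rw [h1, map_one, isConj_one_left, ← map_one f] at hconj
  rw [hf hconj, orderOf_one] at hg₀
  omega

/-- Let `π = A *_⟨g⟩ B` be an amalgamated free product over a subgroup
`⟨g⟩` of order 2.  Then the centralizer `C_π(g)` is generated by `C_A(g) ∪ C_B(g)`. -/
theorem stmt4 {H A B : Type u} [Group H] [Group A] [Group B]
    (g₀ : H) (hg₀ : orderOf g₀ = 2) (hgen : Subgroup.zpowers g₀ = ⊤)
    (ιA : H →* A) (ιB : H →* B)
    (hιA : Function.Injective ιA) (hιB : Function.Injective ιB) :
    Subgroup.centralizer {PushoutI.base (amalgMaps ιA ιB) g₀} =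
      Subgroup.closure
        ((PushoutI.of (φ := amalgMaps ιA ιB) true) ''
            (Subgroup.centralizer {ιA g₀} : Set A) ∪
          (PushoutI.of (φ := amalgMaps ιA ιB) false) ''
            (Subgroup.centralizer {ιB g₀} : Set B)) := by
  have hφ : ∀ i, Function.Injective (amalgMaps ιA ιB i) := Bool.forall_bool.mpr ⟨hιB, hιA⟩
  have hmem : ∀ h : H, h ∈ zpowers g₀ := fun h => hgen ▸ mem_top h
  have hcenter : g₀ ∈ center H := mem_center_iff.mpr fun h => by
    obtain ⟨k, rfl⟩ := mem_zpowers_iff.mp (hmem h)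
    exact (Commute.self_zpow g₀ k).eq.symm
  have hconj : ∀ i h, IsConj (amalgMaps ιA ιB i g₀) (amalgMaps ιA ιB i h) → h = g₀ :=
    fun i h => eq_of_isConj_of_orderOf_eq_two (hφ i) hg₀ (hmem h)
  rw [PushoutI.centralizer_base_eq_iSup_map_centralizer hφ hcenter hconj, iSup_bool_eq,
    Subgroup.closure_union]
  congr 1 <;> exact (closure_eq _).symm
end

section
/- Let $\pi$ be a group with a surjection $w : \pi \to \mathbb{Z}/2\mathbb{Z}$ with kernel $\pi^+$. Suppose $\pi \cong \rho *_{E} C$ is an amalgamated free product where $E \cong \mathbb{Z}/2\mathbb{Z}$, $C \cong \mathbb{Z}/2\mathbb{Z} \oplus \mathbb{Z}$ with $E$ the torsion subgroup of $C$, $w|_E$ is injective, and $\rho^+ = \rho \cap \pi^+$ has index 2 in $\rho$. Then the quotient of $\pi$ by the normal closure of $\rho^+$ is isomorphic to $C$, and hence $\pi$ retracts onto $\mathbb{Z}/2\mathbb{Z} \oplus \mathbb{Z}$. -/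
/-!
Since `w` is injective on `E ≅ ℤ/2`, the map `s = (w|_E)⁻¹ ∘ w|_ρ` retracts `ρ` onto `E` with
kernel `ρ⁺`. Mapping `ρ` to `C` by `s` and `C` identically defines a surjection `π → C` split by
the inclusion of `C`. Its kernel is the normal closure of `ρ⁺`: modulo that closure, every
`r ∈ ρ` equals `s r ∈ E ≤ C`.
-/

open Monoid Subgroup

namespace Amalgam

variable {H A B : Type u} [Group H] [Group A] [Group B] {ιA : H →* A} {ιB : H →* B}

variable (ιA ιB) in
def ofLeft : A →* PushoutI (amalgMaps ιA ιB) := PushoutI.of (φ := amalgMaps ιA ιB) true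

variable (ιA ιB) in
def ofRight : B →* PushoutI (amalgMaps ιA ιB) := PushoutI.of (φ := amalgMaps ιA ιB) false

theorem ofLeft_apply_eq_ofRight_apply (h : H) : ofLeft ιA ιB (ιA h) = ofRight ιA ιB (ιB h) :=
  (PushoutI.of_apply_eq_base (amalgMaps ιA ιB) true h).trans
    (PushoutI.of_apply_eq_base (amalgMaps ιA ιB) false h).symm

variable (ιB) in
def collapseMaps (s : A →* H) : ∀ i, Fam2 A B i →* B
  | true => ιB.comp s
  | false => MonoidHom.id B

theorem collapseMaps_comp {s : A →* H} (hs : s.comp ιA = MonoidHom.id H) :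
    ∀ i, (collapseMaps ιB s i).comp (amalgMaps ιA ιB i) = ιB
  | true => show (ιB.comp s).comp ιA = ιB by rw [MonoidHom.comp_assoc, hs, MonoidHom.comp_id]
  | false => rfl

def collapse (s : A →* H) (hs : s.comp ιA = MonoidHom.id H) :
    PushoutI (amalgMaps ιA ιB) →* B :=
  PushoutI.lift (collapseMaps ιB s) ιB (collapseMaps_comp hs)

variable (s : A →* H) (hs : s.comp ιA = MonoidHom.id H)

@[simp]
theorem collapse_ofLeft (a : A) : collapse (ιB := ιB) s hs (ofLeft ιA ιB a) = ιB (s a) :=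
  PushoutI.lift_of (collapseMaps ιB s) ιB (collapseMaps_comp hs) (i := true) a

@[simp]
theorem collapse_ofRight (b : B) : collapse s hs (ofRight ιA ιB b) = b :=
  PushoutI.lift_of (collapseMaps ιB s) ιB (collapseMaps_comp hs) (i := false) b

theorem ker_collapse :
    (collapse (ιB := ιB) s hs).ker = normalClosure (ofLeft ιA ιB '' s.ker) := by
  set N := normalClosure (ofLeft ιA ιB '' s.ker)
  refine le_antisymm ?_ (normalClosure_le_normal ?_)
  · have hmk : QuotientGroup.mk' N =
        ((QuotientGroup.mk' N).comp (ofRight ιA ιB)).comp (collapse s hs) := by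
      refine PushoutI.hom_ext_nonempty fun
        | false => MonoidHom.ext fun (b : B) => by
            change (ofRight ιA ιB b : PushoutI _ ⧸ N) =
              ofRight ιA ιB (collapse s hs (ofRight ιA ιB b))
            rw [collapse_ofRight]
        | true => MonoidHom.ext fun (a : A) => by
            change (ofLeft ιA ιB a : PushoutI _ ⧸ N) =
              ofRight ιA ιB (collapse s hs (ofLeft ιA ιB a))
            rw [collapse_ofLeft, ← ofLeft_apply_eq_ofRight_apply, QuotientGroup.eq, ← map_inv,
              ← map_mul]
            refine subset_normalClosure ⟨_, ?_, rfl⟩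
            rw [SetLike.mem_coe, MonoidHom.mem_ker, map_mul, map_inv, ← MonoidHom.comp_apply s ιA,
              hs, MonoidHom.id_apply, inv_mul_cancel]
    intro x hx
    rw [← QuotientGroup.eq_one_iff, ← QuotientGroup.mk'_apply, hmk, MonoidHom.comp_apply,
      MonoidHom.mem_ker.1 hx, map_one]
  · rintro _ ⟨a, ha, rfl⟩
    rw [SetLike.mem_coe, MonoidHom.mem_ker, collapse_ofLeft, MonoidHom.mem_ker.1 ha, map_one]

end Amalgam

theorem exists_retraction_of_leftInverse {G Q : Type*} [Group G] [Group Q] {f : G →* Q}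
    {j : Q →* G} (h : Function.LeftInverse f j) :
    ∃ (K : Subgroup G) (r : G →* G), r.range = K ∧ (∀ x ∈ K, r x = x) ∧ Nonempty (K ≃* Q) := by
  refine ⟨j.range, j.comp f, ?_, ?_, ⟨(MonoidHom.ofLeftInverse h).symm⟩⟩
  · rw [MonoidHom.range_comp, MonoidHom.range_eq_top.2 h.surjective, ← MonoidHom.range_eq_map]
  · rintro _ ⟨q, rfl⟩
    rw [MonoidHom.comp_apply, h q]

theorem stmt5_general {π : Type*} {ρ C E : Type u} [Group π] [Group ρ] [Group C] [Group E]
    (w : π →* Multiplicative (ZMod 2))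
    (hE : Nat.card E = 2)
    (ιρ : E →* ρ) (ιC : E →* C)
    (θ : C ≃* Multiplicative (ZMod 2) × Multiplicative ℤ)
    (iso : π ≃* PushoutI (amalgMaps ιρ ιC))
    (hwE : Function.Injective fun e : E => w (iso.symm (PushoutI.base (amalgMaps ιρ ιC) e)))
    (ρplus : Subgroup ρ)
    (hρplus : ρplus = MonoidHom.ker ((w.comp iso.symm.toMonoidHom).comp
      (PushoutI.of (φ := amalgMaps ιρ ιC) true))) :
    Nonempty ((π ⧸ Subgroup.normalClosure
        ((fun r : ρ => iso.symm (PushoutI.of (φ := amalgMaps ιρ ιC) true r)) ''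
          (ρplus : Set ρ))) ≃* C) ∧
      ∃ (Hs : Subgroup π) (r : π →* π), r.range = Hs ∧ (∀ h ∈ Hs, r h = h) ∧
        Nonempty (Hs ≃* Multiplicative (ZMod 2) × Multiplicative ℤ) := by
  set w' := w.comp iso.symm.toMonoidHom
  have : Finite E := Nat.finite_of_card_ne_zero (by omega)
  let wE : E ≃* Multiplicative (ZMod 2) := MulEquiv.ofBijective (w'.comp (PushoutI.base _))
    (hwE.bijective_of_nat_card_le (by simp [hE]))
  let s : ρ →* E := wE.symm.toMonoidHom.comp (w'.comp (Amalgam.ofLeft ιρ ιC))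
  have hs : s.comp ιρ = MonoidHom.id E := by
    ext e
    change wE.symm (w' (PushoutI.of true (amalgMaps ιρ ιC true e))) = e
    rw [PushoutI.of_apply_eq_base]
    exact wE.symm_apply_apply e
  have hker : s.ker = ρplus := hρplus ▸ MonoidHom.ker_mulEquiv_comp _ wE.symm
  let f : π →* C := (Amalgam.collapse s hs).comp (iso : π →* PushoutI (amalgMaps ιρ ιC))
  have hfker : f.ker = normalClosure ((fun r ↦ iso.symm (Amalgam.ofLeft ιρ ιC r)) '' ρplus) := by
    rw [MonoidHom.ker_comp_mulEquiv, Amalgam.ker_collapse, hker,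
      map_normalClosure _ _ iso.symm.surjective, Set.image_image]
    rfl
  have hf : Function.LeftInverse f (iso.symm.toMonoidHom.comp (Amalgam.ofRight ιρ ιC)) :=
    fun c => by simp [f]
  refine ⟨⟨(QuotientGroup.quotientMulEquivOfEq hfker.symm).trans
    (QuotientGroup.quotientKerEquivOfSurjective f hf.surjective)⟩, ?_⟩
  obtain ⟨K, r, hrK, hr, ⟨e⟩⟩ := exists_retraction_of_leftInverse hf
  exact ⟨K, r, hrK, hr, ⟨e.trans θ⟩⟩

/-- Let `π` be a group with a surjection `w : π → ℤ/2ℤ` with kernel `π⁺`.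
Suppose `π ≅ ρ *_E C` where `E ≅ ℤ/2ℤ`, `C ≅ ℤ/2ℤ ⊕ ℤ` with `E` the torsion subgroup of
`C`, `w|_E` injective and `ρ⁺ = ρ ∩ π⁺` of index 2 in `ρ`.  Then `π` modulo the normal
closure of `ρ⁺` is isomorphic to `C`, and `π` retracts onto `ℤ/2ℤ ⊕ ℤ`. -/
theorem stmt5 {π : Type*} {ρ C E : Type u} [Group π] [Group ρ] [Group C] [Group E]
    (w : π →* Multiplicative (ZMod 2)) (hw : Function.Surjective w)
    (hE : Nat.card E = 2)
    (ιρ : E →* ρ) (ιC : E →* C)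
    (hιρ : Function.Injective ιρ) (hιC : Function.Injective ιC)
    (θ : C ≃* Multiplicative (ZMod 2) × Multiplicative ℤ)
    (hEtors : ∀ e : E, (θ (ιC e)).2 = 1)
    (iso : π ≃* PushoutI (amalgMaps ιρ ιC))
    (hwE : Function.Injective fun e : E => w (iso.symm (PushoutI.base (amalgMaps ιρ ιC) e)))
    (ρplus : Subgroup ρ)
    (hρplus : ρplus = MonoidHom.ker ((w.comp iso.symm.toMonoidHom).comp
      (PushoutI.of (φ := amalgMaps ιρ ιC) true)))
    (hindex : ρplus.index = 2) :
    Nonempty ((π ⧸ Subgroup.normalClosure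
        ((fun r : ρ => iso.symm (PushoutI.of (φ := amalgMaps ιρ ιC) true r)) ''
          (ρplus : Set ρ))) ≃* C) ∧
      ∃ (Hs : Subgroup π) (r : π →* π), r.range = Hs ∧ (∀ h ∈ Hs, r h = h) ∧
        Nonempty (Hs ≃* Multiplicative (ZMod 2) × Multiplicative ℤ) :=
  stmt5_general w hE ιρ ιC θ iso hwE ρplus hρplus
end
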